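/- Let g = g₅,₄ be the 5-dimensional complex nilpotent Lie algebra with basis x₁,…,x₅ and nonzero brackets [x₁,x₂] = x₃, [x₁,x₃] = x₄, [x₂,x₃] = x₅ (and anticommutativity). Then dim H²(g,ℂ) = 3, dim ZL²(g,ℂ) = 10, dim HL²(g,ℂ) = 7, and g is not trivial ZL²-uncoupling: the invariant symmetric bilinear form B = ω¹⊙ω⁵ − ω²⊙ω⁴ + ω³⊗ω³ (where (ωⁱ) is the dual basis and ω⊙π = ω⊗π + π⊗ω) satisfies I_B ≠ 0 and I_B ∈ B³(g,ℂ), so that Im I ∩ B³(g,ℂ) ≠ {0}. -/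

import Mathlib

/-!
Indices are 0-based in the code: `x i` is the paper's `x_{i+1}` and `x.coord i` its `ω^{i+1}`.

Each dimension is computed by evaluating cochains on a few pairs of basis vectors: the
evaluation is injective on the space, and an explicit family in the space is dual to it.
Injectivity on `ZL²` holds because a Leibniz cocycle `ψ` is determined by `ψ(·, x₁)` and
`ψ(·, x₂)`: the vectors `Y` with `ψ(·, Y) = 0` form a Lie subalgebra, by the cocycle identity
`ψ(X, [Y, Z]) = ψ([X, Y], Z) - ψ([X, Z], Y)`, and `x₁, x₂` generate `g`. On `Z²`, alternation
and the cocycle identity at `(x₁, x₂, x₃)`, which gives `ψ(x₄, x₂) = ψ(x₅, x₁)`, leave six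
free values; `B²` is spanned by `-ωʲ([·, ·])` for `j = 3, 4, 5`. So `dim ZL² = 10`,
`dim Z² = 6` and `dim B² = 3`.

The Koszul form `B` satisfies `I_B = δ(ω¹ ∧ ω⁵)`, and `I_B(x₁, x₂, x₃) = B(x₃, x₃) = 1`.
-/

noncomputable section

open Module

variable (L : Type*) [LieRing L] [LieAlgebra ℂ L]

/-- The trivial Leibniz coboundary, as a linear map on the space of all ℂ-valued
2-cochains. -/
def leibnizDC : (L → L → ℂ) →ₗ[ℂ] (L → L → L → ℂ) where
  toFun ψ := fun X Y Z => -ψ ⁅X, Y⁆ Z + ψ X ⁅Y, Z⁆ + ψ ⁅X, Z⁆ Y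
  map_add' a b := by
    funext X Y Z
    simp only [Pi.add_apply, neg_add]
    ring
  map_smul' c a := by
    funext X Y Z
    simp only [Pi.smul_apply, RingHom.id_apply, smul_eq_mul]
    ring

/-- The subspace of bilinear forms among all ℂ-valued 2-cochains. -/
def BilC : Submodule ℂ (L → L → ℂ) where
  carrier := {ψ | ∃ Ψ : L →ₗ[ℂ] L →ₗ[ℂ] ℂ, ∀ X Y : L, ψ X Y = Ψ X Y}
  add_mem' := by
    rintro a b ⟨A, hA⟩ ⟨B, hB⟩
    exact ⟨A + B, fun X Y => by simp [hA X Y, hB X Y]⟩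
  zero_mem' := ⟨0, by simp⟩
  smul_mem' := by
    rintro c a ⟨A, hA⟩
    exact ⟨c • A, fun X Y => by simp [hA X Y]⟩

/-- Alternating ℂ-valued 2-cochains. -/
def AltC : Submodule ℂ (L → L → ℂ) where
  carrier := {ψ | ∀ X Y : L, ψ X Y = - ψ Y X}
  add_mem' := by
    intro a b ha hb X Y
    simp only [Pi.add_apply, ha X Y, hb X Y, neg_add]
  zero_mem' := by simp
  smul_mem' := by
    intro c a ha X Y
    simp only [Pi.smul_apply, ha X Y, smul_neg]

/-- Symmetric ℂ-valued 2-cochains. -/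
def SymmC : Submodule ℂ (L → L → ℂ) where
  carrier := {ψ | ∀ X Y : L, ψ X Y = ψ Y X}
  add_mem' := by
    intro a b ha hb X Y
    simp only [Pi.add_apply, ha X Y, hb X Y]
  zero_mem' := by simp
  smul_mem' := by
    intro c a ha X Y
    simp only [Pi.smul_apply, ha X Y]

/-- Trivial Leibniz 2-cocycles: bilinear forms with vanishing trivial Leibniz coboundary. -/
def ZL2C : Submodule ℂ (L → L → ℂ) := BilC L ⊓ LinearMap.ker (leibnizDC L)

/-- Chevalley–Eilenberg (alternating) 2-cocycles with trivial coefficients. -/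
def Z2C : Submodule ℂ (L → L → ℂ) := ZL2C L ⊓ AltC L

/-- Symmetric trivial Leibniz 2-cocycles. -/
def ZL20C : Submodule ℂ (L → L → ℂ) := ZL2C L ⊓ SymmC L

/-- 2-coboundaries with trivial coefficients. -/
def B2C : Submodule ℂ (L → L → ℂ) where
  carrier := {ψ | ∃ f : L →ₗ[ℂ] ℂ, ∀ X Y : L, ψ X Y = - f ⁅X, Y⁆}
  add_mem' := by
    rintro a b ⟨f₁, h₁⟩ ⟨f₂, h₂⟩
    refine ⟨f₁ + f₂, fun X Y => ?_⟩
    simp only [Pi.add_apply, h₁ X Y, h₂ X Y, LinearMap.add_apply, neg_add]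
  zero_mem' := ⟨0, by simp⟩
  smul_mem' := by
    rintro c a ⟨f, h⟩
    refine ⟨c • f, fun X Y => ?_⟩
    simp only [Pi.smul_apply, h X Y, LinearMap.smul_apply, smul_neg]

/-- Chevalley–Eilenberg 3-coboundaries with trivial coefficients: trivial Leibniz
coboundaries of alternating bilinear 2-cochains (on which the Leibniz and
Chevalley–Eilenberg differentials coincide). -/
def B3C : Submodule ℂ (L → L → L → ℂ) := (BilC L ⊓ AltC L).map (leibnizDC L)

/-- The image `Im I` of the Koszul map: the space of trilinear forms spanned by
`(X,Y,Z) ↦ B([X,Y],Z)` with `B` an invariant symmetric bilinear form. -/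
def ImIC : Submodule ℂ (L → L → L → ℂ) :=
  Submodule.span ℂ {T | ∃ B : L →ₗ[ℂ] L →ₗ[ℂ] ℂ,
    (∀ X Y : L, B X Y = B Y X) ∧ (∀ X Y Z : L, B ⁅Z, X⁆ Y = - B X ⁅Z, Y⁆) ∧
    T = fun X Y Z => B ⁅X, Y⁆ Z}

/-- The kernel `ker I` of the Koszul map: invariant symmetric bilinear forms vanishing on
brackets. -/
def KerIC : Submodule ℂ (L → L → ℂ) where
  carrier := {ψ | ψ ∈ BilC L ∧ (∀ X Y : L, ψ X Y = ψ Y X) ∧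
    (∀ X Y Z : L, ψ ⁅Z, X⁆ Y = - ψ X ⁅Z, Y⁆) ∧ (∀ X Y Z : L, ψ ⁅X, Y⁆ Z = 0)}
  add_mem' := by
    rintro a b ⟨ha0, ha1, ha3, ha4⟩ ⟨hb0, hb1, hb3, hb4⟩
    refine ⟨add_mem ha0 hb0, fun X Y => ?_, fun X Y Z => ?_, fun X Y Z => ?_⟩
    · simp only [Pi.add_apply, ha1 X Y, hb1 X Y]
    · simp only [Pi.add_apply, ha3 X Y Z, hb3 X Y Z, neg_add]
    · simp only [Pi.add_apply, ha4 X Y Z, hb4 X Y Z, add_zero]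
  zero_mem' := ⟨zero_mem _, fun X Y => rfl, fun X Y Z => by simp, fun X Y Z => rfl⟩
  smul_mem' := by
    rintro c a ⟨h0, h1, h3, h4⟩
    refine ⟨Submodule.smul_mem _ _ h0, fun X Y => ?_, fun X Y Z => ?_, fun X Y Z => ?_⟩
    · simp only [Pi.smul_apply, h1 X Y]
    · simp only [Pi.smul_apply, h3 X Y Z, smul_neg]
    · simp only [Pi.smul_apply, h4 X Y Z, smul_zero]

section Cochains

variable {M : Type*} [LieRing M]

lemma leibnizDC_apply (ψ : M → M → ℂ) (X Y Z : M) :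
    leibnizDC M ψ X Y Z = -ψ ⁅X, Y⁆ Z + ψ X ⁅Y, Z⁆ + ψ ⁅X, Z⁆ Y := rfl

lemma mem_ker_leibnizDC_iff {ψ : M → M → ℂ} :
    ψ ∈ LinearMap.ker (leibnizDC M) ↔
      ∀ X Y Z : M, -ψ ⁅X, Y⁆ Z + ψ X ⁅Y, Z⁆ + ψ ⁅X, Z⁆ Y = 0 := by
  simp only [LinearMap.mem_ker, funext_iff, leibnizDC_apply, Pi.zero_apply]

end Cochains

section Cocycles

variable {L}

def bilinCochain (B : L →ₗ[ℂ] L →ₗ[ℂ] ℂ) : L → L → ℂ := fun X Y => B X Y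

lemma bilinCochain_mem_BilC (B : L →ₗ[ℂ] L →ₗ[ℂ] ℂ) : bilinCochain B ∈ BilC L :=
  ⟨B, fun _ _ => rfl⟩

def evalPairs {ι κ : Type*} (x : Basis ι ℂ L) (P : κ → ι × ι) :
    (L → L → ℂ) →ₗ[ℂ] (κ → ℂ) where
  toFun ψ k := ψ (x (P k).1) (x (P k).2)
  map_add' _ _ := rfl
  map_smul' _ _ := rfl

@[simp]
lemma evalPairs_apply {ι κ : Type*} (x : Basis ι ℂ L) (P : κ → ι × ι) (ψ : L → L → ℂ) (k : κ) :
    evalPairs x P ψ k = ψ (x (P k).1) (x (P k).2) := rfl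

lemma BilC.apply_eq_zero_of_basis {ι : Type*} (x : Basis ι ℂ L) {ψ : L → L → ℂ}
    (hψ : ψ ∈ BilC L) {Y : L} (h : ∀ i, ψ (x i) Y = 0) (X : L) : ψ X Y = 0 := by
  obtain ⟨Ψ, hΨ⟩ := hψ
  have : Ψ.flip Y = 0 := x.ext fun i => by simpa [hΨ] using h i
  simpa [hΨ] using LinearMap.congr_fun this X

lemma B2C_le_Z2C : B2C L ≤ Z2C L := by
  rintro ψ ⟨f, hf⟩
  refine ⟨⟨⟨LinearMap.mk₂ ℂ (fun X Y => -f ⁅X, Y⁆) ?_ ?_ ?_ ?_, hf⟩, ?_⟩, ?_⟩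
  · intros; simp [add_lie]; ring
  · intros; simp [smul_lie]
  · intros; simp [lie_add]; ring
  · intros; simp [lie_smul]
  · refine mem_ker_leibnizDC_iff.2 fun X Y Z => ?_
    rw [hf, hf, hf, leibniz_lie X Y Z, ← lie_skew Y ⁅X, Z⁆, map_add, map_neg]
    ring
  · intro X Y
    rw [hf, hf, ← lie_skew, map_neg]

theorem ZL2C.eq_zero_of_apply_generators {S : Set L}
    (hS : LieSubalgebra.lieSpan ℂ L S = ⊤) {ψ : L → L → ℂ} (hψ : ψ ∈ ZL2C L)
    (h : ∀ X, ∀ s ∈ S, ψ X s = 0) : ψ = 0 := by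
  obtain ⟨⟨Ψ, hΨ⟩, hker⟩ := hψ
  have hδ := mem_ker_leibnizDC_iff.1 hker
  let K : LieSubalgebra ℂ L :=
    { carrier := {Y | ∀ X, ψ X Y = 0}
      add_mem' := fun {Y Z} hY hZ X => by simp [hΨ] at hY hZ ⊢; simp [hY, hZ]
      zero_mem' := fun X => by simp [hΨ]
      smul_mem' := fun c Y hY X => by simp [hΨ] at hY ⊢; simp [hY]
      lie_mem' := fun {Y Z} hY hZ X => by
        linear_combination hδ X Y Z + hZ ⁅X, Y⁆ - hY ⁅X, Z⁆ }
  have hK : K = ⊤ := eq_top_iff.2 (hS ▸ LieSubalgebra.lieSpan_le.2 fun s hs X => h X s hs)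
  funext X Y
  exact (hK ▸ LieSubalgebra.mem_top Y : Y ∈ K) X

end Cocycles

section LinearAlgebra

variable {K V κ : Type*} [Field K] [AddCommGroup V] [Module K V] [Fintype κ] [DecidableEq κ]

theorem Submodule.finrank_eq_card_of_dual_family {W : Submodule K V} (e : V →ₗ[K] κ → K)
    (he : ∀ v ∈ W, e v = 0 → v = 0) (f : κ → V) (hfW : ∀ k, f k ∈ W)
    (hef : ∀ k, e (f k) = Pi.single k 1) : finrank K W = Fintype.card κ := by
  have hinj : Function.Injective (e ∘ₗ W.subtype) := by
    rw [← LinearMap.ker_eq_bot, LinearMap.ker_eq_bot']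
    exact fun v hv => Subtype.ext (he v v.2 hv)
  have hsurj : Function.Surjective (e ∘ₗ W.subtype) := fun c =>
    ⟨∑ k, c k • ⟨f k, hfW k⟩, by ext; simp [hef, Pi.single_apply]⟩
  rw [(LinearEquiv.ofBijective _ ⟨hinj, hsurj⟩).finrank_eq, Module.finrank_fintype_fun_eq_card]

theorem Submodule.finrank_quotient_comap_subtype_add {W U : Submodule K V}
    [FiniteDimensional K W] (h : U ≤ W) :
    finrank K (W ⧸ U.comap W.subtype) + finrank K U = finrank K W := by
  rw [← (Submodule.comapSubtypeEquivOfLe h).finrank_eq]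
  exact Submodule.finrank_quotient_add_finrank _

end LinearAlgebra

section CoordinateForms

variable {L} {ι : Type*}

def Module.Basis.coordTensor (x : Basis ι ℂ L) (i j : ι) : L →ₗ[ℂ] L →ₗ[ℂ] ℂ :=
  (x.coord i).smulRight (x.coord j)

def Module.Basis.coordWedge (x : Basis ι ℂ L) (i j : ι) : L →ₗ[ℂ] L →ₗ[ℂ] ℂ :=
  x.coordTensor i j - x.coordTensor j i

@[simp]
lemma Module.Basis.coordTensor_apply (x : Basis ι ℂ L) (i j : ι) (X Y : L) :
    x.coordTensor i j X Y = x.coord i X * x.coord j Y := by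
  simp [Module.Basis.coordTensor]

@[simp]
lemma Module.Basis.coordWedge_apply (x : Basis ι ℂ L) (i j : ι) (X Y : L) :
    x.coordWedge i j X Y = x.coord i X * x.coord j Y - x.coord j X * x.coord i Y := by
  simp [Module.Basis.coordWedge]

end CoordinateForms

section G54

variable {L}

def IsG54Basis (x : Basis (Fin 5) ℂ L) : Prop :=
  ∀ i j : Fin 5, ⁅x i, x j⁆ =
      if i = 0 ∧ j = 1 then x 2 else if i = 1 ∧ j = 0 then -x 2
      else if i = 0 ∧ j = 2 then x 3 else if i = 2 ∧ j = 0 then -x 3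
      else if i = 1 ∧ j = 2 then x 4 else if i = 2 ∧ j = 1 then -x 4
      else 0

namespace IsG54Basis

variable {x : Basis (Fin 5) ℂ L}

lemma lie_zero_one (hx : IsG54Basis x) : ⁅x 0, x 1⁆ = x 2 := by simpa using hx 0 1

lemma lie_zero_two (hx : IsG54Basis x) : ⁅x 0, x 2⁆ = x 3 := by simpa using hx 0 2

lemma lie_one_two (hx : IsG54Basis x) : ⁅x 1, x 2⁆ = x 4 := by simpa using hx 1 2

lemma lie_eq (hx : IsG54Basis x) (X Y : L) :
    ⁅X, Y⁆ = (x.coord 0 X * x.coord 1 Y - x.coord 1 X * x.coord 0 Y) • x 2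
      + (x.coord 0 X * x.coord 2 Y - x.coord 2 X * x.coord 0 Y) • x 3
      + (x.coord 1 X * x.coord 2 Y - x.coord 2 X * x.coord 1 Y) • x 4 := by
  unfold IsG54Basis at hx
  conv_lhs => rw [← x.sum_repr X, ← x.sum_repr Y]
  simp only [Fin.sum_univ_five, add_lie, lie_add, smul_lie, lie_smul, hx, Basis.coord_apply,
    Fin.reduceEq, and_self, and_true, and_false, ite_true, ite_false]
  module

lemma lieSpan_eq_top (hx : IsG54Basis x) : LieSubalgebra.lieSpan ℂ L {x 0, x 1} = ⊤ := by
  set A := LieSubalgebra.lieSpan ℂ L {x 0, x 1}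
  have h0 : x 0 ∈ A := LieSubalgebra.subset_lieSpan (by simp)
  have h1 : x 1 ∈ A := LieSubalgebra.subset_lieSpan (by simp)
  have h2 : x 2 ∈ A := hx.lie_zero_one ▸ A.lie_mem h0 h1
  have h3 : x 3 ∈ A := hx.lie_zero_two ▸ A.lie_mem h0 h2
  have h4 : x 4 ∈ A := hx.lie_one_two ▸ A.lie_mem h1 h2
  have hA : ∀ i, x i ∈ A := by
    intro i; fin_cases i <;> assumption
  refine eq_top_iff.2 fun Y _ => ?_
  exact (Submodule.span_le (p := A.toSubmodule)).2 (Set.range_subset_iff.2 hA) (x.mem_span Y)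

end IsG54Basis

end G54

section G54Cohomology

variable {L} {x : Basis (Fin 5) ℂ L}

def zl2Positions (q : Fin 5 × Fin 2) : Fin 5 × Fin 5 := (q.1, Fin.castLE (by norm_num) q.2)

def zl2Family (x : Basis (Fin 5) ℂ L) (p : Fin 5 × Fin 2) : L →ₗ[ℂ] L →ₗ[ℂ] ℂ :=
  ![![x.coordTensor 0 0, x.coordTensor 0 1],
    ![x.coordTensor 1 0, x.coordTensor 1 1],
    ![x.coordWedge 2 0, x.coordWedge 2 1],
    ![x.coordWedge 3 0,
      x.coordTensor 3 1 + x.coordTensor 1 3 - x.coordTensor 2 2 - 2 • x.coordTensor 0 4],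
    ![x.coordTensor 4 0 + x.coordTensor 0 4 + x.coordTensor 2 2 - 2 • x.coordTensor 1 3,
      x.coordWedge 4 1]] p.1 p.2

lemma zl2Family_mem_ZL2C (hx : IsG54Basis x) (p : Fin 5 × Fin 2) :
    bilinCochain (zl2Family x p) ∈ ZL2C L := by
  refine ⟨bilinCochain_mem_BilC _, mem_ker_leibnizDC_iff.2 fun X Y Z => ?_⟩
  obtain ⟨i, k⟩ := p
  fin_cases i <;> fin_cases k <;>
    simp [zl2Family, bilinCochain, hx.lie_eq] <;> ring

lemma evalPairs_zl2Family (p : Fin 5 × Fin 2) :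
    evalPairs x zl2Positions (bilinCochain (zl2Family x p)) = Pi.single p 1 := by
  obtain ⟨i, k⟩ := p
  ext ⟨j, l⟩
  fin_cases i <;> fin_cases k <;>
    simp [zl2Positions, bilinCochain, zl2Family, Pi.single_apply,
      Finsupp.single_apply] <;>
    fin_cases j <;> fin_cases l <;> simp

lemma ZL2C.eq_zero_of_evalPairs (hx : IsG54Basis x) {ψ : L → L → ℂ} (hψ : ψ ∈ ZL2C L)
    (h : evalPairs x zl2Positions ψ = 0) : ψ = 0 := by
  refine ZL2C.eq_zero_of_apply_generators hx.lieSpan_eq_top hψ fun X s hs => ?_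
  obtain ⟨k, rfl⟩ : ∃ k : Fin 2, s = x (Fin.castLE (by norm_num) k) := by
    rcases hs with rfl | rfl
    exacts [⟨0, rfl⟩, ⟨1, rfl⟩]
  exact BilC.apply_eq_zero_of_basis x hψ.1
    (fun i => by simpa [zl2Positions] using congrFun h (i, k)) X

theorem finrank_ZL2C (hx : IsG54Basis x) : finrank ℂ (ZL2C L) = 10 :=
  Submodule.finrank_eq_card_of_dual_family (evalPairs x zl2Positions)
    (fun _ hψ => ZL2C.eq_zero_of_evalPairs hx hψ) _ (zl2Family_mem_ZL2C hx)
    evalPairs_zl2Family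

def z2Positions : Fin 6 → Fin 5 × Fin 5 := ![(1, 0), (2, 0), (2, 1), (3, 0), (4, 0), (4, 1)]

def z2Family (x : Basis (Fin 5) ℂ L) : Fin 6 → L →ₗ[ℂ] L →ₗ[ℂ] ℂ :=
  ![x.coordWedge 1 0, x.coordWedge 2 0, x.coordWedge 2 1, x.coordWedge 3 0,
    x.coordWedge 4 0 + x.coordWedge 3 1, x.coordWedge 4 1]

lemma z2Family_mem_Z2C (hx : IsG54Basis x) (k : Fin 6) : bilinCochain (z2Family x k) ∈ Z2C L := by
  refine ⟨⟨bilinCochain_mem_BilC _, mem_ker_leibnizDC_iff.2 fun X Y Z => ?_⟩, fun X Y => ?_⟩ <;>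
  fin_cases k <;>
    simp [z2Family, bilinCochain, hx.lie_eq] <;> ring

lemma evalPairs_z2Family (k : Fin 6) :
    evalPairs x z2Positions (bilinCochain (z2Family x k)) = Pi.single k 1 := by
  ext l
  fin_cases k <;> fin_cases l <;>
    simp [z2Positions, bilinCochain, z2Family]

lemma Z2C.apply_three_one (hx : IsG54Basis x) {ψ : L → L → ℂ} (hψ : ψ ∈ Z2C L) :
    ψ (x 3) (x 1) = ψ (x 4) (x 0) := by
  obtain ⟨⟨-, hker⟩, halt⟩ := hψ
  have hδ := mem_ker_leibnizDC_iff.1 hker (x 0) (x 1) (x 2)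
  rw [hx.lie_zero_one, hx.lie_one_two, hx.lie_zero_two, halt (x 0)] at hδ
  linear_combination hδ + halt (x 2) (x 2) / 2

lemma Z2C.eq_zero_of_evalPairs (hx : IsG54Basis x) {ψ : L → L → ℂ} (hψ : ψ ∈ Z2C L)
    (h : evalPairs x z2Positions ψ = 0) : ψ = 0 := by
  have h31 := Z2C.apply_three_one hx hψ
  obtain ⟨hZL, halt⟩ := hψ
  have hv : ∀ k, evalPairs x z2Positions ψ k = 0 := congrFun h
  simp [Fin.forall_fin_succ, z2Positions] at hv
  obtain ⟨h10, h20, h21, h30, h40, h41⟩ := hv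
  have hself : ∀ X, ψ X X = 0 := fun X => by linear_combination halt X X / 2
  have h01 : ψ (x 0) (x 1) = 0 := by rw [halt, h10, neg_zero]
  refine ZL2C.eq_zero_of_apply_generators hx.lieSpan_eq_top hZL fun X s hs => ?_
  refine BilC.apply_eq_zero_of_basis x hZL.1 (fun i => ?_) X
  rcases hs with rfl | rfl <;> fin_cases i <;> simp [hself, h10, h20, h30, h40, h01, h21, h31, h41]

theorem finrank_Z2C (hx : IsG54Basis x) : finrank ℂ (Z2C L) = 6 :=
  Submodule.finrank_eq_card_of_dual_family (evalPairs x z2Positions)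
    (fun _ hψ => Z2C.eq_zero_of_evalPairs hx hψ) _ (z2Family_mem_Z2C hx) evalPairs_z2Family

def b2Positions : Fin 3 → Fin 5 × Fin 5 := ![(1, 0), (2, 0), (2, 1)]

def b2Family (x : Basis (Fin 5) ℂ L) (k : Fin 3) : L → L → ℂ :=
  fun X Y => -x.coord (![2, 3, 4] k) ⁅X, Y⁆

lemma evalPairs_b2Family (hx : IsG54Basis x) (k : Fin 3) :
    evalPairs x b2Positions (b2Family x k) = Pi.single k 1 := by
  ext l
  fin_cases k <;> fin_cases l <;> simp [b2Positions, b2Family, hx.lie_eq]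

lemma B2C.eq_zero_of_evalPairs (hx : IsG54Basis x) {ψ : L → L → ℂ} (hψ : ψ ∈ B2C L)
    (h : evalPairs x b2Positions ψ = 0) : ψ = 0 := by
  obtain ⟨f, hf⟩ := hψ
  have hv : ∀ k, evalPairs x b2Positions ψ k = 0 := congrFun h
  simp [Fin.forall_fin_succ, b2Positions, hf, hx.lie_eq] at hv
  funext X Y
  simp [hf, hx.lie_eq X Y, hv]

theorem finrank_B2C (hx : IsG54Basis x) : finrank ℂ (B2C L) = 3 :=
  Submodule.finrank_eq_card_of_dual_family (evalPairs x b2Positions)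
    (fun _ hψ => B2C.eq_zero_of_evalPairs hx hψ) (b2Family x) (fun _ => ⟨_, fun _ _ => rfl⟩)
    (evalPairs_b2Family hx)

end G54Cohomology

section Koszul

variable {L}

def koszulMap (B : L →ₗ[ℂ] L →ₗ[ℂ] ℂ) : L → L → L → ℂ := fun X Y Z => B ⁅X, Y⁆ Z

lemma koszulMap_mem_ImIC {B : L →ₗ[ℂ] L →ₗ[ℂ] ℂ} (hsymm : ∀ X Y : L, B X Y = B Y X)
    (hinv : ∀ X Y Z : L, B ⁅Z, X⁆ Y = -B X ⁅Z, Y⁆) : koszulMap B ∈ ImIC L :=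
  Submodule.subset_span ⟨B, hsymm, hinv, rfl⟩

variable {x : Basis (Fin 5) ℂ L}

def koszulForm (x : Basis (Fin 5) ℂ L) : L →ₗ[ℂ] L →ₗ[ℂ] ℂ :=
  x.coordTensor 0 4 + x.coordTensor 4 0 - x.coordTensor 1 3 - x.coordTensor 3 1 +
    x.coordTensor 2 2

lemma koszulForm_apply (X Y : L) :
    koszulForm x X Y = x.coord 0 X * x.coord 4 Y + x.coord 4 X * x.coord 0 Y
      - x.coord 1 X * x.coord 3 Y - x.coord 3 X * x.coord 1 Y + x.coord 2 X * x.coord 2 Y := by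
  simp [koszulForm]

lemma koszulForm_comm (X Y : L) : koszulForm x X Y = koszulForm x Y X := by
  rw [koszulForm_apply, koszulForm_apply]
  ring

lemma koszulForm_lie_left (hx : IsG54Basis x) (X Y Z : L) :
    koszulForm x ⁅Z, X⁆ Y = -koszulForm x X ⁅Z, Y⁆ := by
  simp [koszulForm_apply, hx.lie_eq]
  ring

lemma koszulMap_koszulForm_ne_zero (hx : IsG54Basis x) : koszulMap (koszulForm x) ≠ 0 := by
  intro h
  have h012 := congrFun (congrFun (congrFun h (x 0)) (x 1)) (x 2)
  simp [koszulMap, hx.lie_zero_one, koszulForm] at h012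

lemma koszulMap_koszulForm_mem_B3C (hx : IsG54Basis x) : koszulMap (koszulForm x) ∈ B3C L := by
  refine Submodule.mem_map.2 ⟨bilinCochain (x.coordWedge 0 4),
    ⟨bilinCochain_mem_BilC _, fun X Y => ?_⟩, funext fun X => funext fun Y => funext fun Z => ?_⟩
  · simp only [bilinCochain, Module.Basis.coordWedge_apply]
    ring
  · simp [leibnizDC_apply, bilinCochain, koszulMap, koszulForm_apply, hx.lie_eq]
    ring

end Koszul

theorem stmt19 (x : Basis (Fin 5) ℂ L)
    (hbr : ∀ i j : Fin 5, ⁅x i, x j⁆ =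
      if i = 0 ∧ j = 1 then x 2 else if i = 1 ∧ j = 0 then -x 2
      else if i = 0 ∧ j = 2 then x 3 else if i = 2 ∧ j = 0 then -x 3
      else if i = 1 ∧ j = 2 then x 4 else if i = 2 ∧ j = 1 then -x 4
      else 0) :
    Module.finrank ℂ (↥(Z2C L) ⧸ Submodule.comap (Z2C L).subtype (B2C L)) = 3 ∧
    Module.finrank ℂ ↥(ZL2C L) = 10 ∧
    Module.finrank ℂ (↥(ZL2C L) ⧸ Submodule.comap (ZL2C L).subtype (B2C L)) = 7 ∧
    (∀ X Y : L,
      (x.coord 0 X * x.coord 4 Y + x.coord 4 X * x.coord 0 Y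
        - x.coord 1 X * x.coord 3 Y - x.coord 3 X * x.coord 1 Y
        + x.coord 2 X * x.coord 2 Y)
      = (x.coord 0 Y * x.coord 4 X + x.coord 4 Y * x.coord 0 X
        - x.coord 1 Y * x.coord 3 X - x.coord 3 Y * x.coord 1 X
        + x.coord 2 Y * x.coord 2 X)) ∧
    (∀ X Y Z : L,
      (x.coord 0 ⁅Z, X⁆ * x.coord 4 Y + x.coord 4 ⁅Z, X⁆ * x.coord 0 Y
        - x.coord 1 ⁅Z, X⁆ * x.coord 3 Y - x.coord 3 ⁅Z, X⁆ * x.coord 1 Y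
        + x.coord 2 ⁅Z, X⁆ * x.coord 2 Y)
      = -(x.coord 0 X * x.coord 4 ⁅Z, Y⁆ + x.coord 4 X * x.coord 0 ⁅Z, Y⁆
        - x.coord 1 X * x.coord 3 ⁅Z, Y⁆ - x.coord 3 X * x.coord 1 ⁅Z, Y⁆
        + x.coord 2 X * x.coord 2 ⁅Z, Y⁆)) ∧
    (fun X Y Z : L =>
      x.coord 0 ⁅X, Y⁆ * x.coord 4 Z + x.coord 4 ⁅X, Y⁆ * x.coord 0 Z
        - x.coord 1 ⁅X, Y⁆ * x.coord 3 Z - x.coord 3 ⁅X, Y⁆ * x.coord 1 Z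
        + x.coord 2 ⁅X, Y⁆ * x.coord 2 Z) ≠ 0 ∧
    (fun X Y Z : L =>
      x.coord 0 ⁅X, Y⁆ * x.coord 4 Z + x.coord 4 ⁅X, Y⁆ * x.coord 0 Z
        - x.coord 1 ⁅X, Y⁆ * x.coord 3 Z - x.coord 3 ⁅X, Y⁆ * x.coord 1 Z
        + x.coord 2 ⁅X, Y⁆ * x.coord 2 Z) ∈ B3C L ∧
    ImIC L ⊓ B3C L ≠ ⊥ := by
  have hx : IsG54Basis x := hbr
  have hZ2 := finrank_Z2C hx
  have hZL2 := finrank_ZL2C hx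
  have hB2 := finrank_B2C hx
  have : FiniteDimensional ℂ (Z2C L) := Module.finite_of_finrank_pos (by omega)
  have : FiniteDimensional ℂ (ZL2C L) := Module.finite_of_finrank_pos (by omega)
  have hH2 := Submodule.finrank_quotient_comap_subtype_add (B2C_le_Z2C (L := L))
  have hHL2 := Submodule.finrank_quotient_comap_subtype_add
    ((B2C_le_Z2C (L := L)).trans inf_le_left)
  have hIB : koszulMap (koszulForm x) ∈ ImIC L ⊓ B3C L :=
    ⟨koszulMap_mem_ImIC koszulForm_comm (koszulForm_lie_left hx),
      koszulMap_koszulForm_mem_B3C hx⟩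
  -- The coordinate expressions in the statement unfold definitionally to `koszulForm x` and
  -- `koszulMap (koszulForm x)`.
  refine ⟨by omega, hZL2, by omega, koszulForm_comm, koszulForm_lie_left hx,
    koszulMap_koszulForm_ne_zero hx, hIB.2, ?_⟩
  exact (Submodule.ne_bot_iff _).2 ⟨_, hIB, koszulMap_koszulForm_ne_zero hx⟩
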